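/- arXiv:2204.00234 — 11 statements merged into one kernel-verified Lean document; each statement's English description precedes it below -/
import Mathlib

section
/- For all integers k ≥ 2 and α with 0 ≤ α ≤ k, we have F_{k+α}^2 ≡ F_{k-α}^2 (mod F_{2k}). -/
private lemma fibA (n : ℕ) : (Nat.fib (n+3) : ℤ)^2 =
    2*(Nat.fib (n+2):ℤ)^2 + 2*(Nat.fib (n+1):ℤ)^2 - (Nat.fib n:ℤ)^2 := by
  have h2 : Nat.fib (n+2) = Nat.fib n + Nat.fib (n+1) := Nat.fib_add_two
  have h3 : Nat.fib (n+3) = Nat.fib (n+1) + Nat.fib (n+2) := by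
    rw [show n+3 = (n+1)+2 by omega]; exact Nat.fib_add_two
  rw [h3, h2]; push_cast; ring

private lemma fibB (m : ℕ) : (Nat.fib (m+6) : ℤ) =
    2*(Nat.fib (m+4):ℤ) + 2*(Nat.fib (m+2):ℤ) - (Nat.fib m:ℤ) := by
  have h2 : Nat.fib (m+2) = Nat.fib m + Nat.fib (m+1) := Nat.fib_add_two
  have h3 : Nat.fib (m+3) = Nat.fib (m+1) + Nat.fib (m+2) := by
    rw [show m+3 = (m+1)+2 by omega]; exact Nat.fib_add_two
  have h4 : Nat.fib (m+4) = Nat.fib (m+2) + Nat.fib (m+3) := by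
    rw [show m+4 = (m+2)+2 by omega]; exact Nat.fib_add_two
  have h5 : Nat.fib (m+5) = Nat.fib (m+3) + Nat.fib (m+4) := by
    rw [show m+5 = (m+3)+2 by omega]; exact Nat.fib_add_two
  have h6 : Nat.fib (m+6) = Nat.fib (m+4) + Nat.fib (m+5) := by
    rw [show m+6 = (m+4)+2 by omega]; exact Nat.fib_add_two
  rw [h6, h5, h4, h3, h2]; push_cast; ring

private lemma fib_key : ∀ α k : ℕ, α ≤ k →
    (Nat.fib (k+α) : ℤ)^2 = (Nat.fib (k-α):ℤ)^2 + (Nat.fib (2*k):ℤ) * (Nat.fib (2*α):ℤ) := by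
  intro α
  induction α using Nat.strong_induction_on with
  | _ α ih =>
    match α with
    | 0 => intro k _; simp
    | 1 =>
      intro k hk
      obtain ⟨m, rfl⟩ : ∃ m, k = m + 1 := ⟨k - 1, by omega⟩
      rw [show m+1+1 = m+2 by omega, show m+1-1 = m by omega,
        show 2*(m+1) = m+(m+1)+1 by omega]
      have hadd := Nat.fib_add m (m+1)
      have h2 : Nat.fib (m+2) = Nat.fib m + Nat.fib (m+1) := Nat.fib_add_two
      rw [hadd, h2]
      push_cast; ring
    | 2 =>
      intro k hk
      obtain ⟨m, rfl⟩ : ∃ m, k = m + 2 := ⟨k - 2, by omega⟩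
      rw [show m+2+2 = m+4 by omega, show m+2-2 = m by omega,
        show 2*(m+2) = (m+1)+(m+2)+1 by omega]
      have hadd := Nat.fib_add (m+1) (m+2)
      rw [show m+1+(m+2)+1 = (m+1)+(m+2)+1 from rfl] at hadd
      have h2 : Nat.fib (m+2) = Nat.fib m + Nat.fib (m+1) := Nat.fib_add_two
      have h3 : Nat.fib (m+3) = Nat.fib (m+1) + Nat.fib (m+2) := by
        rw [show m+3 = (m+1)+2 by omega]; exact Nat.fib_add_two
      have h4 : Nat.fib (m+4) = Nat.fib (m+2) + Nat.fib (m+3) := by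
        rw [show m+4 = (m+2)+2 by omega]; exact Nat.fib_add_two
      rw [hadd, h4, h3, h2]
      push_cast
      norm_num [Nat.fib]
      ring
    | (β+3) =>
      intro k hk
      obtain ⟨n, rfl⟩ : ∃ n, k = n + (β + 3) := ⟨k - (β+3), by omega⟩
      have h1 := ih β (by omega) (n + (β+3)) (by omega)
      have h2 := ih (β+1) (by omega) (n + (β+3)) (by omega)
      have h3 := ih (β+2) (by omega) (n + (β+3)) (by omega)
      rw [show n+(β+3)+β = (n+2*β)+3 by omega, show n+(β+3)-β = n+3 by omega,
        show 2*(n+(β+3)) = 2*n+2*β+6 by omega, show 2*β = 2*β from rfl] at h1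
      rw [show n+(β+3)+(β+1) = (n+2*β)+4 by omega, show n+(β+3)-(β+1) = n+2 by omega,
        show 2*(n+(β+3)) = 2*n+2*β+6 by omega, show 2*(β+1) = 2*β+2 by omega] at h2
      rw [show n+(β+3)+(β+2) = (n+2*β)+5 by omega, show n+(β+3)-(β+2) = n+1 by omega,
        show 2*(n+(β+3)) = 2*n+2*β+6 by omega, show 2*(β+2) = 2*β+4 by omega] at h3
      rw [show n+(β+3)+(β+3) = (n+2*β)+6 by omega, show n+(β+3)-(β+3) = n by omega,
        show 2*(n+(β+3)) = 2*n+2*β+6 by omega, show 2*(β+3) = 2*β+6 by omega]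
      have A1 : (Nat.fib ((n+2*β)+6) : ℤ)^2 =
          2*(Nat.fib ((n+2*β)+5):ℤ)^2 + 2*(Nat.fib ((n+2*β)+4):ℤ)^2
            - (Nat.fib ((n+2*β)+3):ℤ)^2 := by
        have := fibA ((n+2*β)+3)
        rw [show (n+2*β)+3+3 = (n+2*β)+6 by omega, show (n+2*β)+3+2 = (n+2*β)+5 by omega,
          show (n+2*β)+3+1 = (n+2*β)+4 by omega] at this
        exact this
      have A2 : (Nat.fib (n+3) : ℤ)^2 =
          2*(Nat.fib (n+2):ℤ)^2 + 2*(Nat.fib (n+1):ℤ)^2 - (Nat.fib n:ℤ)^2 := fibA n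
      have B : (Nat.fib (2*β+6) : ℤ) =
          2*(Nat.fib (2*β+4):ℤ) + 2*(Nat.fib (2*β+2):ℤ) - (Nat.fib (2*β):ℤ) := fibB (2*β)
      linear_combination A1 + 2*h3 + 2*h2 - h1 - A2 - (Nat.fib (2*n+2*β+6) : ℤ) * B

theorem fib_sq_add_modEq_fib_sq_sub (k α : ℕ) (hk : 2 ≤ k) (hα : α ≤ k) :
    (Nat.fib (k + α)) ^ 2 ≡ (Nat.fib (k - α)) ^ 2 [MOD Nat.fib (2 * k)] := by
  rw [← Int.natCast_modEq_iff]
  push_cast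
  have h := fib_key α k hα
  exact (Int.ModEq.symm (Int.modEq_iff_dvd.mpr ⟨Nat.fib (2*α), by linarith [h]⟩))
end

section
/- For all integers k ≥ 2 and α with 0 ≤ α ≤ k, we have F_{k+1+α}^2 ≡ -F_{k-α}^2 (mod F_{2k+1}). -/
private lemma fib_cast_add_two (m : ℕ) :
    (Nat.fib (m + 2) : ℤ) = Nat.fib m + Nat.fib (m + 1) := by
  rw [Nat.fib_add_two]; push_cast; ring

private lemma fib_aux (k : ℕ) (hk : 1 ≤ k) : ∀ α, α + 1 ≤ k →
    ((Nat.fib (k+1+α) : ℤ)^2 + (Nat.fib (k-α) : ℤ)^2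
        = (Nat.fib (2*k+1) : ℤ) * Nat.fib (2*α+1)) ∧
    ((Nat.fib (k+1+α) : ℤ) * Nat.fib (k+2+α)
        = (Nat.fib (k-α) : ℤ) * Nat.fib (k-α-1)
          + (Nat.fib (2*k+1) : ℤ) * Nat.fib (2*α+2)) ∧
    ((Nat.fib (k+2+α) : ℤ)^2 + (Nat.fib (k-α-1) : ℤ)^2
        = (Nat.fib (2*k+1) : ℤ) * Nat.fib (2*α+3)) := by
  intro α
  induction α with
  | zero =>
    intro h
    have hN : (Nat.fib (2*k+1) : ℤ) = (Nat.fib (k+1) : ℤ)^2 + (Nat.fib k : ℤ)^2 := by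
      rw [Nat.fib_two_mul_add_one]; push_cast; ring
    have hkm : (Nat.fib (k+1) : ℤ) = Nat.fib (k-1) + Nat.fib k := by
      have e : k + 1 = (k-1) + 2 := by omega
      have e' : k - 1 + 1 = k := by omega
      rw [e, fib_cast_add_two, e']
    have hk2 : (Nat.fib (k+2) : ℤ) = Nat.fib k + Nat.fib (k+1) := fib_cast_add_two k
    have f1 : (Nat.fib 1 : ℤ) = 1 := by norm_num
    have f2 : (Nat.fib 2 : ℤ) = 1 := by norm_num
    have f3 : (Nat.fib 3 : ℤ) = 2 := by norm_num [Nat.fib]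
    simp only [Nat.add_zero, Nat.sub_zero, Nat.mul_zero, Nat.zero_add]
    refine ⟨by rw [f1]; linarith, ?_, ?_⟩
    · rw [f2]
      linear_combination (Nat.fib k : ℤ) * hkm + (Nat.fib (k+1) : ℤ) * hk2 - hN
    · rw [f3]
      linear_combination ((Nat.fib (k+2):ℤ) + Nat.fib (k+1) + Nat.fib k) * hk2
        + ((Nat.fib k : ℤ) - Nat.fib (k+1) - Nat.fib (k-1)) * hkm - 2 * hN
  | succ α ih =>
    intro h
    obtain ⟨h1, h2, h3⟩ := ih (by omega)
    have hA : (Nat.fib (k+3+α) : ℤ) = Nat.fib (k+1+α) + Nat.fib (k+2+α) := by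
      have e : k + 3 + α = (k+1+α) + 2 := by omega
      have e' : k + 1 + α + 1 = k + 2 + α := by omega
      rw [e, fib_cast_add_two, e']
    have hB : (Nat.fib (k-α) : ℤ) = Nat.fib (k-α-2) + Nat.fib (k-α-1) := by
      have e : k - α - 2 + 2 = k - α := by omega
      have e' : k - α - 2 + 1 = k - α - 1 := by omega
      have h0 := fib_cast_add_two (k-α-2)
      rw [e', e] at h0
      exact h0
    have hF1 : (Nat.fib (2*α+4) : ℤ) = Nat.fib (2*α+2) + Nat.fib (2*α+3) := by
      have e : 2*α+4 = (2*α+2) + 2 := by omega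
      have e' : 2*α+2+1 = 2*α+3 := by omega
      rw [e, fib_cast_add_two, e']
    have hF2 : (Nat.fib (2*α+5) : ℤ) = Nat.fib (2*α+3) + Nat.fib (2*α+4) := by
      have e : 2*α+5 = (2*α+3) + 2 := by omega
      have e' : 2*α+3+1 = 2*α+4 := by omega
      rw [e, fib_cast_add_two, e']
    have e1 : k+1+(α+1) = k+2+α := by omega
    have e2 : k+2+(α+1) = k+3+α := by omega
    have e3 : k-(α+1) = k-α-1 := by omega
    have e4 : k-(α+1)-1 = k-α-2 := by omega
    have e5 : 2*(α+1)+1 = 2*α+3 := by omega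
    have e6 : 2*(α+1)+2 = 2*α+4 := by omega
    have e7 : 2*(α+1)+3 = 2*α+5 := by omega
    rw [e1, e2, e3, show k-α-1-1 = k-α-2 from by omega, e5, e6, e7]
    refine ⟨h3, ?_, ?_⟩
    · linear_combination h2 + h3 + (Nat.fib (k+2+α) : ℤ) * hA
        + (Nat.fib (k-α-1) : ℤ) * hB - (Nat.fib (2*k+1) : ℤ) * hF1
    · have hF0 : (Nat.fib (2*α+3) : ℤ) = Nat.fib (2*α+1) + Nat.fib (2*α+2) := by
        have e : 2*α+3 = (2*α+1) + 2 := by omega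
        have e' : 2*α+1+1 = 2*α+2 := by omega
        rw [e, fib_cast_add_two, e']
      linear_combination h1 + h3 + 2*h2
        + ((Nat.fib (k+3+α):ℤ) + Nat.fib (k+1+α) + Nat.fib (k+2+α)) * hA
        - ((Nat.fib (k-α):ℤ) + Nat.fib (k-α-2) - Nat.fib (k-α-1)) * hB
        - (Nat.fib (2*k+1) : ℤ) * (hF2 + hF1 + hF0)

theorem fib_sq_modEq_neg (k α : ℕ) (hk : 2 ≤ k) (hα : α ≤ k) :
    ((Nat.fib (k + 1 + α) : ℤ)) ^ 2 ≡ -((Nat.fib (k - α) : ℤ)) ^ 2 [ZMOD (Nat.fib (2 * k + 1) : ℤ)] := by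
  have key : (Nat.fib (k+1+α) : ℤ)^2 + (Nat.fib (k-α) : ℤ)^2
      = (Nat.fib (2*k+1) : ℤ) * Nat.fib (2*α+1) := by
    cases α with
    | zero =>
      exact (fib_aux k (by omega) 0 (by omega)).1
    | succ β =>
      have h := (fib_aux k (by omega) β (by omega)).2.2
      have e1 : k+2+β = k+1+(β+1) := by omega
      have e2 : k-β-1 = k-(β+1) := by omega
      have e3 : 2*β+3 = 2*(β+1)+1 := by omega
      rwa [e1, e2, e3] at h
  refine Int.modEq_iff_dvd.mpr ⟨-(Nat.fib (2*α+1) : ℤ), by linarith⟩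
end

section
/- For every even integer j ≥ 4 and every integer i ≥ 0, F_{i+j}^2 ≡ F_i^2 (mod F_j); that is, j is a period of the sequence of squared Fibonacci numbers modulo F_j. -/
lemma cassini_int : ∀ n : ℕ, (Nat.fib (n+2) : ℤ) * Nat.fib n - (Nat.fib (n+1) : ℤ)^2 = (-1)^(n+1) := by
  intro n
  induction n with
  | zero => simp
  | succ k ih =>
    have h1 : (Nat.fib (k+3) : ℤ) = Nat.fib (k+1) + Nat.fib (k+2) := by
      exact_mod_cast (Nat.fib_add_two (n := k+1))
    have h2 : (Nat.fib (k+2) : ℤ) = Nat.fib k + Nat.fib (k+1) := by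
      exact_mod_cast (Nat.fib_add_two (n := k))
    rw [show k + 1 + 2 = k + 3 from rfl, h1, h2, pow_succ]
    rw [h2] at ih
    ring_nf
    ring_nf at ih
    linarith

theorem fib_sq_period_even (j : ℕ) (hj : 4 ≤ j) (hje : Even j) (i : ℕ) :
    (Nat.fib (i + j)) ^ 2 ≡ (Nat.fib i) ^ 2 [MOD Nat.fib j] := by
  rw [← ZMod.natCast_eq_natCast_iff]
  push_cast
  -- key: fib j = 0 in ZMod (fib j)
  have hj0 : (Nat.fib j : ZMod (Nat.fib j)) = 0 := ZMod.natCast_self _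
  -- fib(j+1)^2 = 1 in ZMod (fib j)
  obtain ⟨k, hk⟩ : ∃ k, j = k + 2 := ⟨j - 2, by omega⟩
  have hcas := cassini_int (k + 1)
  have heven : ((-1 : ℤ))^(k+1+1) = 1 := by
    have : Even (k + 2) := by rw [hk] at hje; exact hje
    exact Even.neg_one_pow this
  rw [heven] at hcas
  have hsq : (Nat.fib (j+1) : ZMod (Nat.fib j)) ^ 2 = 1 := by
    have h1 : (Nat.fib (j+1) : ZMod (Nat.fib j)) = Nat.fib (j-1) := by
      have : Nat.fib (j+1) = Nat.fib (j-1) + Nat.fib j := by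
        subst hk
        show Nat.fib (k+3) = Nat.fib (k+1) + Nat.fib (k+2)
        exact Nat.fib_add_two
      rw [this]; push_cast [hj0]; ring
    have h2 : (Nat.fib (j+1) : ℤ) * Nat.fib (j-1) = (Nat.fib j : ℤ)^2 + 1 := by
      rw [hk]
      have : k + 2 + 1 = k + 1 + 2 := rfl
      rw [this]
      simpa using by linarith [hcas]
    have h2' : (Nat.fib (j+1) * Nat.fib (j-1) : ℕ) = Nat.fib j ^ 2 + 1 := by
      exact_mod_cast h2
    have : ((Nat.fib (j+1) * Nat.fib (j-1) : ℕ) : ZMod (Nat.fib j)) = 1 := by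
      rw [h2']; push_cast [hj0]; ring
    push_cast at this
    rw [pow_two]
    nth_rewrite 2 [h1]
    exact this
  cases i with
  | zero => simp [hj0]
  | succ a =>
    have hadd : Nat.fib (a + 1 + j) = Nat.fib a * Nat.fib j + Nat.fib (a+1) * Nat.fib (j+1) := by
      have := Nat.fib_add a j
      rw [show a + j + 1 = a + 1 + j by ring] at this
      exact this
    rw [hadd]
    push_cast [hj0]
    rw [mul_zero, zero_add, mul_pow, hsq, mul_one]
end

section
/- For every integer j ≥ 4 and every integer i ≥ 0, F_{i+2j}^2 ≡ F_i^2 (mod F_j). -/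
theorem cassini_aux (n : ℕ) :
    (Nat.fib (n + 2) : ℤ) * Nat.fib n - (Nat.fib (n + 1) : ℤ) ^ 2 = (-1) ^ (n + 1) := by
  induction n with
  | zero => simp
  | succ n ih =>
    have h2 : (Nat.fib (n + 2) : ℤ) = Nat.fib n + Nat.fib (n + 1) := by
      rw [Nat.fib_add_two]; push_cast; ring
    have h3 : (Nat.fib (n + 3) : ℤ) = Nat.fib (n + 1) + Nat.fib (n + 2) := by
      rw [show n + 3 = (n + 1) + 2 from rfl, Nat.fib_add_two]; push_cast; ring
    rw [show n + 1 + 2 = n + 3 from rfl, h3]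
    rw [pow_succ]
    linear_combination -ih - (Nat.fib (n + 2) : ℤ) * h2

theorem fib_sq_period_two_mul (j : ℕ) (hj : 4 ≤ j) (i : ℕ) :
    (Nat.fib (i + 2 * j)) ^ 2 ≡ (Nat.fib i) ^ 2 [MOD Nat.fib j] := by
  obtain ⟨k, rfl⟩ : ∃ k, j = k + 4 := ⟨j - 4, by omega⟩
  rw [← ZMod.natCast_eq_natCast_iff]
  set m := Nat.fib (k + 4) with hm
  -- fib (i + 2*(k+4)) = fib i * fib (2k+7) + fib (i+1) * fib (2k+8)
  have hsplit : Nat.fib (i + 2 * (k + 4)) =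
      Nat.fib i * Nat.fib (2 * k + 7) + Nat.fib (i + 1) * Nat.fib (2 * k + 8) := by
    rw [show i + 2 * (k + 4) = i + (2 * k + 7) + 1 from by ring, Nat.fib_add]
  have hdvd : (Nat.fib (2 * k + 8) : ZMod m) = 0 := by
    rw [ZMod.natCast_eq_zero_iff]
    exact Nat.fib_dvd (k + 4) (2 * k + 8) ⟨2, by ring⟩
  -- fib (2k+7) = fib (k+4)^2 + fib (k+3)^2
  have hodd : Nat.fib (2 * k + 7) = Nat.fib (k + 4) ^ 2 + Nat.fib (k + 3) ^ 2 := by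
    have := Nat.fib_two_mul_add_one (k + 3)
    rw [show 2 * (k + 3) + 1 = 2 * k + 7 from by ring] at this
    exact this
  have hm0 : (m : ZMod m) = 0 := ZMod.natCast_self m
  have hodd' : (Nat.fib (2 * k + 7) : ZMod m) = (Nat.fib (k + 3) : ZMod m) ^ 2 := by
    rw [hodd]; push_cast; rw [← hm, hm0]; ring
  -- Cassini: fib(k+4)*fib(k+2) - fib(k+3)^2 = (-1)^(k+3) in ZMod m
  have hc := congrArg (fun z : ℤ => (z : ZMod m)) (cassini_aux (k + 2))
  push_cast at hc
  rw [show k + 2 + 2 = k + 4 from rfl, show k + 2 + 1 = k + 3 from rfl, ← hm, hm0] at hc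
  have hsq : (Nat.fib (k + 3) : ZMod m) ^ 2 = -(-1 : ZMod m) ^ (k + 3) := by
    linear_combination -hc
  have hq : (Nat.fib (2 * k + 7) : ZMod m) ^ 2 = 1 := by
    rw [hodd', hsq]; ring_nf
    rw [mul_comm, pow_mul]; simp
  push_cast [hsplit, hdvd]
  rw [mul_zero, add_zero, mul_pow, hq, mul_one]
end

section
/- For every odd integer j ≥ 5 and every α with 1 ≤ α ≤ j, F_{j+α}^2 ≡ -F_α^2 (mod F_j). -/
lemma cassini (n : ℕ) :
    (Nat.fib (n + 2) : ℤ) * Nat.fib n - (Nat.fib (n + 1)) ^ 2 = (-1) ^ (n + 1) := by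
  induction n with
  | zero => simp
  | succ k ih =>
    have h2 : (Nat.fib (k + 3) : ℤ) = Nat.fib (k + 1) + Nat.fib (k + 2) := by
      rw [show k + 3 = (k + 1) + 2 by ring, Nat.fib_add_two]; push_cast; ring
    have h1 : (Nat.fib (k + 2) : ℤ) = Nat.fib k + Nat.fib (k + 1) := by
      rw [Nat.fib_add_two]; push_cast; ring
    rw [show k + 1 + 2 = k + 3 by ring, h2, pow_succ]
    rw [h1] at ih ⊢
    linear_combination -ih

theorem fib_add_sq_modEq_neg_sq (j α : ℕ) (hj : 5 ≤ j) (hjo : Odd j)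
    (hα1 : 1 ≤ α) (hαj : α ≤ j) :
    ((Nat.fib (j + α) : ℤ)) ^ 2 ≡ -((Nat.fib α : ℤ)) ^ 2 [ZMOD (Nat.fib j : ℤ)] := by
  obtain ⟨m, rfl⟩ := Nat.exists_eq_add_of_le hα1
  rw [Nat.add_comm 1 m]
  have hadd : (Nat.fib (j + (m + 1)) : ℤ)
      = Nat.fib j * Nat.fib m + Nat.fib (j + 1) * Nat.fib (m + 1) := by
    rw [show j + (m + 1) = j + m + 1 by ring, Nat.fib_add]; push_cast; ring
  have h1 : (Nat.fib (j + (m + 1)) : ℤ) ≡ (Nat.fib (j + 1) : ℤ) * Nat.fib (m + 1)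
      [ZMOD (Nat.fib j : ℤ)] := by
    rw [Int.modEq_iff_dvd]
    exact ⟨-Nat.fib m, by rw [hadd]; ring⟩
  -- F_{j+1}^2 ≡ -1 mod F_j
  obtain ⟨k, rfl⟩ : ∃ k, j = k + 1 := ⟨j - 1, by omega⟩
  have hc := cassini k
  have hodd : ((-1 : ℤ)) ^ (k + 1) = -1 := Odd.neg_one_pow hjo
  rw [hodd] at hc
  have hsq : ((Nat.fib (k + 1 + 1) : ℤ)) ^ 2 ≡ -1 [ZMOD (Nat.fib (k + 1) : ℤ)] := by
    rw [Int.modEq_iff_dvd]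
    refine ⟨-((Nat.fib (k + 2) : ℤ) + Nat.fib (k + 1)), ?_⟩
    have hf : (Nat.fib (k + 1 + 1) : ℤ) = Nat.fib k + Nat.fib (k + 1) := by
      rw [Nat.fib_add_two]; push_cast; ring
    rw [show k + 2 = k + 1 + 1 from rfl] at hc
    linear_combination -hc - (Nat.fib (k+1+1) : ℤ) * hf
  have hfinal : ((Nat.fib (k + 1 + 1) : ℤ) * Nat.fib (m + 1)) ^ 2 ≡
      -((Nat.fib (m + 1) : ℤ)) ^ 2 [ZMOD (Nat.fib (k + 1) : ℤ)] := by
    calc ((Nat.fib (k + 1 + 1) : ℤ) * Nat.fib (m + 1)) ^ 2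
        = (Nat.fib (k + 1 + 1) : ℤ) ^ 2 * (Nat.fib (m + 1) : ℤ) ^ 2 := by ring
      _ ≡ -1 * (Nat.fib (m + 1) : ℤ) ^ 2 [ZMOD (Nat.fib (k + 1) : ℤ)] :=
        hsq.mul_right _
      _ = -((Nat.fib (m + 1) : ℤ)) ^ 2 := by ring
  exact (h1.pow 2).trans hfinal
end

section
/- For every even integer j ≥ 4 with j/2 = t, if t+1 ≤ i ≤ j-1 then the residue of F_i^2 modulo F_j equals F_{j-i}^2; i.e., F_i^2 ≡ F_{j-i}^2 (mod F_j) and F_{j-i}^2 < F_j. -/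
open Nat

lemma fib_key_s9 (m k : ℕ) :
    fib (m + 6) * fib (k + 6) + 8 * (fib (m + 2) * fib (k + 2)) =
      8 * (fib (m + 4) * fib (k + 4)) + fib m * fib k := by
  simp [Nat.fib_add_two]
  ring

lemma fib_L : ∀ (a b : ℕ),
    fib (b + 2 * a) ^ 2 = fib b ^ 2 + fib (2 * a + 2 * b) * fib (2 * a)
  | 0, b => by simp
  | 1, b => by
    rw [show b + 2 * 1 = b + 2 by ring,
        show 2 * 1 + 2 * b = b + (b + 1) + 1 by ring,
        show (2 : ℕ) * 1 = 2 by ring, Nat.fib_add b (b+1)]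
    simp [Nat.fib_add_two]
    ring
  | 2, b => by
    rw [show b + 2 * 2 = b + 4 by ring,
        show 2 * 2 + 2 * b = (b + 1) + (b + 2) + 1 by ring,
        show (2 : ℕ) * 2 = 4 by ring, Nat.fib_add (b+1) (b+2)]
    simp [Nat.fib_add_two]
    ring
  | (n + 3), b => by
    have h0 := fib_L n b
    have h1 := fib_L (n + 1) b
    have h2 := fib_L (n + 2) b
    rw [show b + 2 * (n + 1) = b + 2 * n + 2 by ring,
        show 2 * (n + 1) + 2 * b = 2 * n + 2 * b + 2 by ring,
        show 2 * (n + 1) = 2 * n + 2 by ring] at h1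
    rw [show b + 2 * (n + 2) = b + 2 * n + 4 by ring,
        show 2 * (n + 2) + 2 * b = 2 * n + 2 * b + 4 by ring,
        show 2 * (n + 2) = 2 * n + 4 by ring] at h2
    rw [show b + 2 * (n + 3) = b + 2 * n + 6 by ring,
        show 2 * (n + 3) + 2 * b = 2 * n + 2 * b + 6 by ring,
        show 2 * (n + 3) = 2 * n + 6 by ring]
    have k1 := fib_key_s9 (b + 2 * n) (b + 2 * n)
    have k2 := fib_key_s9 (2 * n + 2 * b) (2 * n)
    simp only [← pow_two] at k1
    linarith [h0, h1, h2, k1, k2]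

theorem fib_sq_residue_even (j t i : ℕ) (hj : 4 ≤ j) (ht : j = 2 * t)
    (hi1 : t + 1 ≤ i) (hi2 : i ≤ j - 1) :
    (Nat.fib i) ^ 2 ≡ (Nat.fib (j - i)) ^ 2 [MOD Nat.fib j] ∧
    (Nat.fib (j - i)) ^ 2 < Nat.fib j := by
  have key := fib_L (i - t) (j - i)
  rw [show j - i + 2 * (i - t) = i by omega,
      show 2 * (i - t) + 2 * (j - i) = j by omega] at key
  constructor
  · have hle : fib (j - i) ^ 2 ≤ fib i ^ 2 := by
      rw [key]; exact Nat.le_add_right _ _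
    exact ((Nat.modEq_iff_dvd' hle).mpr ⟨fib (2 * (i - t)), by omega⟩).symm
  · have h1 : fib (j - i) ^ 2 ≤ fib (t - 1) ^ 2 :=
      Nat.pow_le_pow_left (fib_mono (by omega)) 2
    have h2 : fib (2 * (t - 1) + 1) = fib t ^ 2 + fib (t - 1) ^ 2 := by
      have := Nat.fib_two_mul_add_one (t - 1)
      rwa [show t - 1 + 1 = t by omega] at this
    have h3 : 1 ≤ fib t ^ 2 := Nat.one_le_pow 2 _ (Nat.fib_pos.mpr (by omega))
    have h4 : fib (2 * (t - 1) + 1) ≤ fib (j - 1) := fib_mono (by omega)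
    have h5 : fib (j - 1) < fib j := by
      have := Nat.fib_lt_fib_succ (n := j - 1) (by omega)
      rwa [show j - 1 + 1 = j by omega] at this
    omega
end

section
/- For every odd integer j = 2t+1 ≥ 5, if t+2 ≤ i ≤ j-1 then F_i^2 ≡ F_j - F_{j-i}^2 (mod F_j), and 0 ≤ F_j - F_{j-i}^2 < F_j, so the residue of F_i^2 modulo F_j equals F_j - F_{j-i}^2. -/
open Nat

lemma fib_cassini_like (m : ℕ) :
    ((Nat.fib (m+1) : ℤ))^2 - (Nat.fib (m+1) : ℤ) * Nat.fib m - (Nat.fib m : ℤ)^2 = (-1)^m := by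
  induction m with
  | zero => simp
  | succ n ih =>
    rw [Nat.fib_add_two]
    push_cast
    ring_nf
    ring_nf at ih
    linarith [ih]

lemma fib_catalan (c s : ℕ) :
    ((Nat.fib (s + 2*c + 2) : ℤ)) * Nat.fib s
      = ((Nat.fib (s + c + 1) : ℤ))^2 - (-1)^s * ((Nat.fib (c+1) : ℤ))^2 := by
  have h1 : s + 2*c + 2 = s + (2*c+1) + 1 := by ring
  have e1 := Nat.fib_add s (2*c+1)
  have e2 := Nat.fib_add s c
  have e3 := Nat.fib_two_mul_add_one c
  have e4 := Nat.fib_two_mul_add_two c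
  have hc := fib_cassini_like s
  rw [h1, e1]
  have h2 : 2*c + 1 + 1 = 2*c + 2 := by ring
  rw [h2, e3, e4, e2]
  push_cast
  linear_combination (-((Nat.fib (c+1) : ℤ))^2) * hc

theorem fib_sq_residue_odd (j t i : ℕ) (hj : 5 ≤ j) (ht : j = 2 * t + 1)
    (hi1 : t + 2 ≤ i) (hi2 : i ≤ j - 1) :
    ((Nat.fib i : ℤ)) ^ 2 ≡ (Nat.fib j : ℤ) - ((Nat.fib (j - i) : ℤ)) ^ 2 [ZMOD (Nat.fib j : ℤ)] ∧
    0 ≤ (Nat.fib j : ℤ) - ((Nat.fib (j - i) : ℤ)) ^ 2 ∧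
    (Nat.fib j : ℤ) - ((Nat.fib (j - i) : ℤ)) ^ 2 < (Nat.fib j : ℤ) ∧
    ((Nat.fib i : ℤ)) ^ 2 % (Nat.fib j : ℤ) = (Nat.fib j : ℤ) - ((Nat.fib (j - i) : ℤ)) ^ 2 := by
  set k := j - i with hk
  set s := i - k with hs
  have ht2 : 2 ≤ t := by omega
  have hk1 : 1 ≤ k := by omega
  have hkt : k ≤ t - 1 := by omega
  have hsodd : Odd s := by
    refine ⟨i - t - 1, by omega⟩
  -- Catalan identity
  have key := fib_catalan (k - 1) s
  have e1 : s + 2 * (k - 1) + 2 = j := by omega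
  have e2 : s + (k - 1) + 1 = i := by omega
  have e3 : k - 1 + 1 = k := by omega
  rw [e1, e2, e3, hsodd.neg_one_pow] at key
  -- key : (fib j : ℤ) * fib s = fib i ^ 2 - (-1) * fib k ^ 2
  have hkey : ((Nat.fib i : ℤ))^2 = (Nat.fib j : ℤ) * Nat.fib s - (Nat.fib k : ℤ)^2 := by
    linarith [key]
  -- size bounds
  have hb : Nat.fib k ^ 2 ≤ Nat.fib j := by
    have h1 : Nat.fib k ≤ Nat.fib (t - 1) := Nat.fib_mono hkt
    have h2 : Nat.fib (t - 1) ≤ Nat.fib (t + 1) := Nat.fib_mono (by omega)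
    have h3 : Nat.fib j = Nat.fib (t + 1) ^ 2 + Nat.fib t ^ 2 := by
      rw [ht]; exact Nat.fib_two_mul_add_one t
    calc Nat.fib k ^ 2 ≤ Nat.fib (t + 1) ^ 2 :=
          Nat.pow_le_pow_left (h1.trans h2) 2
      _ ≤ Nat.fib j := by omega
  have hb' : ((Nat.fib k : ℤ))^2 ≤ (Nat.fib j : ℤ) := by exact_mod_cast hb
  have hpos : 0 < (Nat.fib k : ℤ)^2 := by
    have : 0 < Nat.fib k := Nat.fib_pos.mpr hk1
    positivity
  have hfjpos : 0 < (Nat.fib j : ℤ) := by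
    have : 0 < Nat.fib j := Nat.fib_pos.mpr (by omega)
    exact_mod_cast this
  have hmod : ((Nat.fib i : ℤ))^2 ≡ (Nat.fib j : ℤ) - (Nat.fib k : ℤ)^2
      [ZMOD (Nat.fib j : ℤ)] := by
    have : (Nat.fib j : ℤ) ∣ ((Nat.fib j : ℤ) - (Nat.fib k : ℤ)^2) - (Nat.fib i : ℤ)^2 := by
      refine ⟨1 - Nat.fib s, by rw [hkey]; ring⟩
    exact (Int.modEq_iff_dvd.mpr this)
  refine ⟨hmod, by linarith, by linarith, ?_⟩
  have := hmod
  unfold Int.ModEq at this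
  rw [this, Int.emod_eq_of_lt (by linarith) (by linarith)]
end

section
/- For every even integer j ≥ 4 and every integer i with j < i < 2j and i even, F_i ≡ F_j - F_{2j-i} (mod F_j), equivalently F_i ≡ -F_{2j-i} (mod F_j). -/
lemma fib_sub_identity (m : ℕ) : ∀ n : ℕ, (Nat.fib m : ℤ) =
    (-1 : ℤ) ^ n * ((Nat.fib (m + n) : ℤ) * Nat.fib (n + 1)
      - (Nat.fib (m + n + 1) : ℤ) * Nat.fib n) := by
  intro n
  induction n with
  | zero => simp
  | succ n ih =>
    have h1 : Nat.fib (n + 2) = Nat.fib n + Nat.fib (n + 1) := Nat.fib_add_two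
    have h2 : Nat.fib (m + n + 2) = Nat.fib (m + n) + Nat.fib (m + n + 1) := Nat.fib_add_two
    rw [ih]
    rw [show m + (n + 1) + 1 = m + n + 2 by omega, show m + (n + 1) = m + n + 1 by omega, h1, h2]
    push_cast
    ring

theorem fib_modEq_even_j_even_i (j i : ℕ) (hj : 4 ≤ j) (hje : Even j)
    (hi1 : j < i) (hi2 : i < 2 * j) (hie : Even i) :
    (Nat.fib i : ℤ) ≡ (Nat.fib j : ℤ) - (Nat.fib (2 * j - i) : ℤ) [ZMOD (Nat.fib j : ℤ)] ∧
    (Nat.fib i : ℤ) ≡ -(Nat.fib (2 * j - i) : ℤ) [ZMOD (Nat.fib j : ℤ)] := by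
  set k := i - j with hk
  have hik : i = j + k := by omega
  have hke : Even k := by
    rw [hik] at hie; exact (Nat.even_add.mp hie).mp hje
  have hkj : k < j := by omega
  have h2ji : 2 * j - i = j - k := by omega
  -- E1 : fib i = fib (j-1) * fib k + fib j * fib (k+1)
  have hj1 : j - 1 + k + 1 = i := by omega
  have hj2 : j - 1 + 1 = j := by omega
  have E1 : (Nat.fib i : ℤ) = (Nat.fib (j - 1) : ℤ) * Nat.fib k
      + (Nat.fib j : ℤ) * Nat.fib (k + 1) := by
    have := Nat.fib_add (j - 1) k
    rw [hj1, hj2] at this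
    exact_mod_cast this
  -- E2 : fib (j-k) = fib j * fib (k+1) - fib (j+1) * fib k
  have hjk : j - k + k = j := by omega
  have E2 : (Nat.fib (j - k) : ℤ) = (Nat.fib j : ℤ) * Nat.fib (k + 1)
      - (Nat.fib (j + 1) : ℤ) * Nat.fib k := by
    have := fib_sub_identity (j - k) k
    rw [hjk, hke.neg_one_pow] at this
    linarith [this]
  -- E3 : fib (j+1) = fib (j-1) + fib j
  have E3 : (Nat.fib (j + 1) : ℤ) = (Nat.fib (j - 1) : ℤ) + Nat.fib j := by
    have h : j - 1 + 2 = j + 1 := by omega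
    have := @Nat.fib_add_two (j - 1)
    rw [h, hj2] at this
    exact_mod_cast this
  rw [h2ji]
  constructor
  · rw [Int.modEq_iff_dvd]
    exact ⟨1 + Nat.fib k - 2 * Nat.fib (k + 1), by rw [E1, E2, E3]; ring⟩
  · rw [Int.modEq_iff_dvd]
    exact ⟨(Nat.fib k : ℤ) - 2 * Nat.fib (k + 1), by rw [E1, E2, E3]; ring⟩
end

section
/- For every odd integer j ≥ 5 and every integer i ≥ 0, F_{i+4j} ≡ F_i (mod F_j); moreover the sequence (F_i mod F_j) has minimal period exactly 4j. -/
/-- Cassini identity over ℤ. -/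
theorem my_cassini (n : ℕ) :
    (Nat.fib (n+1) : ℤ)^2 - Nat.fib (n+2) * Nat.fib n = (-1)^n := by
  induction n with
  | zero => simp
  | succ k ih =>
    have h2 : (Nat.fib (k+3) : ℤ) = Nat.fib (k+2) + Nat.fib (k+1) := by
      rw [show k+3 = (k+1)+2 by ring, Nat.fib_add_two]; push_cast; ring
    have : (Nat.fib (k+2) : ℤ)^2 - Nat.fib (k+3) * Nat.fib (k+1)
        = -((Nat.fib (k+1) : ℤ)^2 - Nat.fib (k+2) * Nat.fib k) := by
      rw [h2, Nat.fib_add_two]; push_cast; ring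
    rw [this, ih]; ring

theorem my_sq_neg_one (j : ℕ) (hjo : Odd j) :
    ((Nat.fib (j+1) : ZMod (Nat.fib j)))^2 = -1 := by
  have h := my_cassini j
  have := congrArg (fun z : ℤ => (z : ZMod (Nat.fib j))) h
  simp only [Int.cast_sub, Int.cast_pow, Int.cast_mul, Int.cast_natCast,
    Int.cast_neg, Int.cast_one, ZMod.natCast_self, mul_zero, sub_zero,
    Odd.neg_one_pow hjo] at this
  exact this

theorem my_pow (j m : ℕ) :
    ((Nat.fib (j*m+1) : ZMod (Nat.fib j))) = (Nat.fib (j+1) : ZMod (Nat.fib j))^m := by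
  induction m with
  | zero => simp
  | succ k ih =>
    have : j*(k+1)+1 = j*k + j + 1 := by ring
    rw [this, Nat.fib_add, Nat.cast_add, Nat.cast_mul, Nat.cast_mul,
      ZMod.natCast_self, mul_zero, zero_add, ih, pow_succ]

theorem my_dvd (j p : ℕ) (hj : 5 ≤ j) (hp : 0 < p) (h : Nat.fib j ∣ Nat.fib p) :
    j ∣ p := by
  have hg : Nat.fib j ∣ Nat.fib (Nat.gcd j p) := by
    rw [Nat.fib_gcd]; exact Nat.dvd_gcd dvd_rfl h
  have hgpos : 0 < Nat.gcd j p := Nat.gcd_pos_of_pos_right _ hp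
  have hle : Nat.fib j ≤ Nat.fib (Nat.gcd j p) :=
    Nat.le_of_dvd (Nat.fib_pos.mpr hgpos) hg
  have : j = Nat.gcd j p := by
    by_contra hne
    have hlt : Nat.gcd j p < j := lt_of_le_of_ne (Nat.gcd_le_left _ (by omega)) (Ne.symm hne)
    have : Nat.fib (Nat.gcd j p) < Nat.fib j := by
      calc Nat.fib (Nat.gcd j p) ≤ Nat.fib (j-1) := Nat.fib_mono (by omega)
        _ < Nat.fib j := by
          have := Nat.fib_lt_fib_succ (n := j-1) (by omega)
          rwa [Nat.sub_add_cancel (by omega)] at this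
    omega
  exact this ▸ Nat.gcd_dvd_right j p

theorem fib_mod_minimal_period_odd (j : ℕ) (hj : 5 ≤ j) (hjo : Odd j) :
    IsLeast {p : ℕ | 0 < p ∧ ∀ i : ℕ, Nat.fib (i + p) ≡ Nat.fib i [MOD Nat.fib j]} (4 * j) := by
  set N := Nat.fib j with hN
  have hN5 : 5 ≤ N := by
    calc 5 = Nat.fib 5 := rfl
      _ ≤ N := Nat.fib_mono hj
  haveI : NeZero N := ⟨by omega⟩
  set a : ZMod N := (Nat.fib (j+1) : ZMod N) with ha
  have hsq : a^2 = -1 := my_sq_neg_one j hjo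
  have hne11 : (1 : ZMod N) ≠ -1 := by
    intro h
    have : ((1:ℕ) : ZMod N) = ((N-1 : ℕ) : ZMod N) := by
      push_cast [Nat.cast_sub (by omega : 1 ≤ N)]; simpa using h
    have := (ZMod.natCast_eq_natCast_iff' _ _ _).mp this
    rw [Nat.mod_eq_of_lt (by omega), Nat.mod_eq_of_lt (by omega)] at this
    omega
  -- a ≠ 1 and a ≠ -1
  have haval : a = ((Nat.fib (j-1) : ℕ) : ZMod N) := by
    have : j + 1 = (j-1) + 2 := by omega
    rw [ha, this, Nat.fib_add_two, Nat.cast_add]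
    have : j - 1 + 1 = j := by omega
    rw [this, hN, ZMod.natCast_self, add_zero]
  have hfibj1 : 3 ≤ Nat.fib (j-1) := by
    calc 3 = Nat.fib 4 := rfl
      _ ≤ Nat.fib (j-1) := Nat.fib_mono (by omega)
  have hfibj1' : Nat.fib (j-1) + 2 ≤ N := by
    have h1 : N = Nat.fib (j-2) + Nat.fib (j-1) := by
      have h := Nat.fib_add_two (n := j-2)
      rw [show (j-2)+2 = j by omega, show (j-2)+1 = j-1 by omega] at h
      exact hN.trans h
    have h2 : 2 ≤ Nat.fib (j-2) := by
      calc 2 = Nat.fib 3 := rfl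
        _ ≤ Nat.fib (j-2) := Nat.fib_mono (by omega)
    omega
  have hane1 : a ≠ 1 := by
    rw [haval]
    intro h
    have : ((Nat.fib (j-1) : ℕ) : ZMod N) = ((1:ℕ) : ZMod N) := by simpa using h
    have := (ZMod.natCast_eq_natCast_iff' _ _ _).mp this
    rw [Nat.mod_eq_of_lt (by omega), Nat.mod_eq_of_lt (by omega)] at this
    omega
  have haneneg1 : a ≠ -1 := by
    rw [haval]
    intro h
    have : ((Nat.fib (j-1) : ℕ) : ZMod N) = ((N-1 : ℕ) : ZMod N) := by
      rw [h]; push_cast [Nat.cast_sub (by omega : 1 ≤ N)]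
      rw [ZMod.natCast_self]; ring
    have := (ZMod.natCast_eq_natCast_iff' _ _ _).mp this
    rw [Nat.mod_eq_of_lt (by omega), Nat.mod_eq_of_lt (by omega)] at this
    omega
  -- a^4 = 1
  have ha4 : a^4 = 1 := by
    have : a^4 = (a^2)^2 := by ring
    rw [this, hsq]; ring
  constructor
  · -- membership
    refine ⟨by omega, fun i => ?_⟩
    have hz : ((Nat.fib (4*j) : ℕ) : ZMod N) = 0 := by
      rw [hN, (ZMod.natCast_eq_zero_iff _ _)]
      exact Nat.fib_dvd j (4*j) ⟨4, by ring⟩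
    have ho : ((Nat.fib (4*j+1) : ℕ) : ZMod N) = 1 := by
      have := my_pow j 4
      rw [show j*4 = 4*j by ring] at this
      rw [this, ha4]
    rw [← ZMod.natCast_eq_natCast_iff]
    cases i with
    | zero => simpa using hz
    | succ k =>
      rw [show k + 1 + 4*j = k + 4*j + 1 by ring, Nat.fib_add, Nat.cast_add,
        Nat.cast_mul, Nat.cast_mul, hz, ho, mul_zero, mul_one, zero_add]
  · -- lower bound
    rintro p ⟨hp, hper⟩
    have h0 : ((Nat.fib p : ℕ) : ZMod N) = 0 := by
      have := (hper 0)
      rw [Nat.zero_add] at this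
      have := (ZMod.natCast_eq_natCast_iff _ _ _).mpr this
      simpa using this
    have h1 : ((Nat.fib (p+1) : ℕ) : ZMod N) = 1 := by
      have := (hper 1)
      rw [show 1 + p = p + 1 by ring] at this
      have := (ZMod.natCast_eq_natCast_iff _ _ _).mpr this
      simpa using this
    have hdvd : N ∣ Nat.fib p := by
      rwa [ZMod.natCast_eq_zero_iff] at h0
    obtain ⟨m, hm⟩ := my_dvd j p hj hp hdvd
    have hm0 : 0 < m := by
      rcases Nat.eq_zero_or_pos m with h | h
      · subst h; omega
      · exact h
    have ham : a^m = 1 := by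
      have := my_pow j m
      rw [← hm] at this
      rw [← this, h1]
    -- 4 ∣ m
    have h4m : 4 ∣ m := by
      have key : a ^ (m % 4) = 1 := by
        have : a ^ m = a ^ (4 * (m / 4) + m % 4) := by
          congr 1; omega
        rw [this, pow_add, pow_mul, ha4, one_pow, one_mul] at ham
        exact ham
      have hlt : m % 4 < 4 := Nat.mod_lt _ (by norm_num)
      set r := m % 4 with hr
      interval_cases r
      · exact Nat.dvd_of_mod_eq_zero hr.symm
      · rw [pow_one] at key; exact absurd key hane1
      · rw [hsq] at key; exact absurd key.symm hne11
      · have : a^3 = a^2 * a := by ring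
        rw [this, hsq, neg_one_mul] at key
        have : a = -1 := by
          have := congrArg Neg.neg key
          simpa using this
        exact absurd this haneneg1
    obtain ⟨k, hk⟩ := h4m
    have hk1 : 1 ≤ k := by omega
    calc 4*j = 4*j*1 := by ring
      _ ≤ 4*j*k := Nat.mul_le_mul_left _ hk1
      _ = p := by rw [hm, hk]; ring
end

section
/- Let j ≥ 4 with j ≠ 6, and let e ≥ 1. Then for every integer i ≥ 1, F_i^e ≡ 0 (mod F_j) if and only if j divides i. -/
/-!
If `F_j ∣ F_i ^ e` but `j ∤ i`, every prime factor of `F_j` divides `F_{gcd j i}`, hence `F_d`,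
where `j = d q` with `q` prime and `gcd j i ∣ d`. This is impossible once `F_{dq}` has a prime
factor not dividing `F_d`, a relative form of Carmichael's primitive divisor theorem that holds
unless `(d, q) = (3, 2)`.

To see it, put `a = F_d`, `b = F_{d-1}`. From `Q ^ d = a Q + b` for `Q = !![1, 1; 1, 0]`, the
binomial theorem gives `F_{dn} = ∑ C(n, k) a^k b^(n-k) F_k`, so `F_{dq} = a G` with
`G ≡ q b^(q-1) + C(q, 2) a b^(q-2) (mod a²)`. If every prime factor of `G` divided `a`, then, as
`gcd(a, b) = 1`, `G` would be a power of `q` exceeding `q`, so `q² ∣ G`. For odd `q` we have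
`q ∣ a` and `q ∣ C(q, 2)`, so the congruence forces `q ∣ b`. For `q = 2`, `G = 2b + a` is the
Lucas number `L_d`, which is never divisible by `8`.
-/

open Nat Finset

theorem fib_matrix_pow_succ (n : ℕ) :
    (!![1, 1; 1, 0] : Matrix (Fin 2) (Fin 2) ℕ) ^ (n + 1) =
      !![fib (n + 2), fib (n + 1); fib (n + 1), fib n] := by
  induction n with
  | zero => ext i j; fin_cases i <;> fin_cases j <;> rfl
  | succ n ih =>
    rw [pow_succ, ih]
    ext i j; fin_cases i <;> fin_cases j <;> simp [fib_add_two, add_comm, add_left_comm]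

theorem fib_matrix_pow_apply_zero_one (n : ℕ) :
    ((!![1, 1; 1, 0] : Matrix (Fin 2) (Fin 2) ℕ) ^ n) 0 1 = fib n := by
  cases n with
  | zero => rfl
  | succ n => simp [fib_matrix_pow_succ]

theorem fib_matrix_pow_succ_eq_smul_add (n : ℕ) :
    (!![1, 1; 1, 0] : Matrix (Fin 2) (Fin 2) ℕ) ^ (n + 1) =
      fib (n + 1) • !![1, 1; 1, 0] + fib n • 1 := by
  rw [fib_matrix_pow_succ]
  ext i j; fin_cases i <;> fin_cases j <;> simp [Matrix.one_fin_two, fib_add_two, add_comm]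

theorem fib_mul_eq_sum_choose (d n : ℕ) :
    fib (d * n) =
      ∑ k ∈ range (n + 1), n.choose k * fib d ^ k * fib (d - 1) ^ (n - k) * fib k := by
  obtain _ | m := d
  · -- both sides vanish, as `fib (0 - 1) = fib 0 = 0`
    rw [zero_mul, fib_zero, eq_comm]
    refine sum_eq_zero fun k _ => ?_
    cases k <;> simp
  have hcomm :
      Commute (fib (m + 1) • !![1, 1; 1, 0]) (fib m • 1 : Matrix (Fin 2) (Fin 2) ℕ) :=
    ((Commute.one_right _).smul_right _).smul_left _
  rw [← fib_matrix_pow_apply_zero_one, pow_mul, fib_matrix_pow_succ_eq_smul_add, hcomm.add_pow,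
    Matrix.sum_apply]
  refine sum_congr rfl fun k _ => ?_
  simp only [smul_pow, one_pow, mul_smul_comm, mul_one, ← nsmul_eq_mul', Matrix.smul_apply,
    fib_matrix_pow_apply_zero_one, smul_eq_mul, add_tsub_cancel_right]
  ring

theorem exists_fib_mul_eq (d : ℕ) {n : ℕ} (hn : 2 ≤ n) : ∃ c, fib (d * n) = fib d *
    (n * fib (d - 1) ^ (n - 1) + n.choose 2 * fib d * fib (d - 1) ^ (n - 2) + fib d ^ 2 * c) := by
  obtain ⟨r, rfl⟩ : ∃ r, n = r + 2 := ⟨n - 2, by omega⟩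
  set c := ∑ k ∈ range r,
    (r + 2).choose (k + 3) * fib d ^ k * fib (d - 1) ^ (r - (k + 1)) * fib (k + 3)
  have hc : ∑ k ∈ range r, (r + 2).choose (k + 1 + 1 + 1) * fib d ^ (k + 1 + 1 + 1) *
      fib (d - 1) ^ (r + 2 - (k + 1 + 1 + 1)) * fib (k + 1 + 1 + 1) = fib d ^ 3 * c := by
    rw [mul_sum]
    refine sum_congr rfl fun k _ => ?_
    rw [show r + 2 - (k + 1 + 1 + 1) = r - (k + 1) by omega]
    ring
  refine ⟨c, ?_⟩
  rw [fib_mul_eq_sum_choose, sum_range_succ', sum_range_succ', sum_range_succ', hc]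
  simp only [zero_add, reduceAdd, add_tsub_cancel_right, fib_two, mul_one, choose_one_right,
    pow_one, Nat.add_one_sub_one, fib_one, choose_zero_right, pow_zero, tsub_zero, one_mul,
    fib_zero, mul_zero, add_zero]
  ring

theorem fib_mul_two (d : ℕ) : fib (d * 2) = fib d * (2 * fib (d - 1) + fib d) := by
  rw [fib_mul_eq_sum_choose]
  simp only [sum_range_succ, range_one, sum_singleton, choose_zero_right, pow_zero, mul_one,
    tsub_zero, one_mul, fib_zero, mul_zero, choose_succ_self_right, pow_one, Nat.add_one_sub_one,
    fib_one, zero_add, choose_self, tsub_self, fib_two]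
  ring

theorem fib_add_twelve_mod_eight (n : ℕ) : fib (n + 12) % 8 = fib n % 8 := by
  have h : fib (n + 12) = fib n * 89 + fib (n + 1) * 144 := by
    have h := fib_add n 11
    norm_num [add_assoc] at h
    exact h
  omega

theorem not_eight_dvd_two_mul_fib_add_fib_succ (n : ℕ) : ¬ 8 ∣ 2 * fib n + fib (n + 1) := by
  induction n using Nat.strong_induction_on with
  | _ n ih =>
    rcases lt_or_ge n 12 with hn | hn
    · interval_cases n <;> decide
    · obtain ⟨k, rfl⟩ := exists_add_of_le hn
      have h0 := fib_add_twelve_mod_eight k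
      have h1 := fib_add_twelve_mod_eight (k + 1)
      have := ih k (by omega)
      rw [add_comm 12 k, show k + 12 + 1 = k + 1 + 12 by ring]
      omega

theorem Nat.pow_succ_dvd_of_forall_prime_dvd_eq {q G k : ℕ} (hq : q.Prime)
    (hG : ∀ p, p.Prime → p ∣ G → p = q) (hk : q ^ k < G) : q ^ (k + 1) ∣ G := by
  have hG0 : G ≠ 0 := by omega
  rw [Nat.eq_prime_pow_of_unique_prime_dvd hG0 (hG _ ·)] at hk ⊢
  exact pow_dvd_pow q ((pow_lt_pow_iff_right₀ hq.one_lt).mp hk)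

theorem Nat.Prime.dvd_of_dvd_mul_pow_add_mul {p n b m a t : ℕ} (hp : p.Prime) (hab : Coprime b a)
    (hpa : p ∣ a) (h : p ∣ n * b ^ m + a * t) : p ∣ n := by
  rcases hp.dvd_mul.mp ((Nat.dvd_add_left (hpa.mul_right t)).mp h) with hpn | hpb
  · exact hpn
  · exact absurd hab (Nat.Prime.not_coprime_iff_dvd.mpr ⟨p, hp, hp.dvd_of_dvd_pow hpb, hpa⟩)

theorem coprime_fib_pred_fib {d : ℕ} (hd : d ≠ 0) : Coprime (fib (d - 1)) (fib d) := by
  simpa [Nat.sub_add_cancel (Nat.one_le_iff_ne_zero.mpr hd)] using fib_coprime_fib_succ (d - 1)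

theorem exists_prime_dvd_fib_two_mul_not_dvd_fib {d : ℕ} (hd : 4 ≤ d) :
    ∃ p, p.Prime ∧ p ∣ fib (d * 2) ∧ ¬ p ∣ fib d := by
  by_contra! H
  set a := fib d
  set b := fib (d - 1)
  have hG : ∀ p, p.Prime → p ∣ 2 * b + a → p = 2 := fun p hp hpG =>
    have hpa : p ∣ a := H p hp (fib_mul_two d ▸ dvd_mul_of_dvd_right hpG a)
    (prime_dvd_prime_iff_eq hp prime_two).mp
      (hp.dvd_of_dvd_mul_pow_add_mul (m := 1) (t := 1) (coprime_fib_pred_fib (by omega)) hpa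
        (by simpa using hpG))
  have hb : 2 ≤ b := fib_mono (show 3 ≤ d - 1 by omega)
  have ha : 3 ≤ a := fib_mono hd
  have h8 := Nat.pow_succ_dvd_of_forall_prime_dvd_eq prime_two hG (k := 2) (by omega)
  refine not_eight_dvd_two_mul_fib_add_fib_succ (d - 1) ?_
  rwa [Nat.sub_add_cancel (by omega : 1 ≤ d)]

theorem exists_prime_dvd_fib_mul_not_dvd_fib_of_ne_two {d q : ℕ} (hd : 2 ≤ d) (hq : q.Prime)
    (hq2 : q ≠ 2) : ∃ p, p.Prime ∧ p ∣ fib (d * q) ∧ ¬ p ∣ fib d := by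
  by_contra! H
  obtain ⟨c, hc⟩ := exists_fib_mul_eq d hq.two_le
  set a := fib d
  set b := fib (d - 1)
  set G := q * b ^ (q - 1) + q.choose 2 * a * b ^ (q - 2) + a ^ 2 * c
  have hab := coprime_fib_pred_fib (show d ≠ 0 by omega)
  have hdvd : ∀ p, p.Prime → p ∣ G → p ∣ a := fun p hp hpG =>
    H p hp (hc ▸ dvd_mul_of_dvd_right hpG a)
  have hG : ∀ p, p.Prime → p ∣ G → p = q := fun p hp hpG =>
    (prime_dvd_prime_iff_eq hp hq).mp <| hp.dvd_of_dvd_mul_pow_add_mul (m := q - 1) hab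
      (hdvd p hp hpG) (t := q.choose 2 * b ^ (q - 2) + a * c) (by convert hpG using 1; ring)
  have ha : 0 < a := fib_pos.mpr (by omega)
  have hb : 0 < b := fib_pos.mpr (by omega)
  have hqG : q ^ 1 < G := by
    have : 0 < q.choose 2 * a * b ^ (q - 2) := by
      have := Nat.choose_pos hq.two_le
      positivity
    have : q ≤ q * b ^ (q - 1) := Nat.le_mul_of_pos_right q (by positivity)
    rw [pow_one]
    omega
  have hq2G : q ^ 2 ∣ G := Nat.pow_succ_dvd_of_forall_prime_dvd_eq hq hG hqG
  have hqa : q ∣ a := hdvd q hq ((dvd_pow_self q two_ne_zero).trans hq2G)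
  have hq_sq : q ^ 2 ∣ q * b ^ (q - 1) := by
    have hchoose : q ∣ q.choose 2 := hq.dvd_choose_self two_ne_zero (by have := hq.two_le; omega)
    have h1 : q ^ 2 ∣ q.choose 2 * a * b ^ (q - 2) :=
      (pow_two q ▸ mul_dvd_mul hchoose hqa).mul_right _
    have h2 : q ^ 2 ∣ a ^ 2 * c := (pow_dvd_pow_of_dvd hqa 2).mul_right c
    exact (Nat.dvd_add_left h1).mp ((Nat.dvd_add_left h2).mp hq2G)
  rw [pow_two, Nat.mul_dvd_mul_iff_left hq.pos] at hq_sq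
  exact Nat.Prime.not_coprime_iff_dvd.mpr ⟨q, hq, hq.dvd_of_dvd_pow hq_sq, hqa⟩ hab

theorem exists_prime_dvd_fib_mul_not_dvd_fib {d q : ℕ} (hq : q.Prime) (hdq : 3 ≤ d * q)
    (h32 : (d, q) ≠ (3, 2)) : ∃ p, p.Prime ∧ p ∣ fib (d * q) ∧ ¬ p ∣ fib d := by
  rcases le_or_gt d 2 with hd | hd
  · have hfd : fib d = 1 := by
      interval_cases d
      · omega
      · rfl
      · rfl
    have hfdq : fib (d * q) ≠ 1 := (fib_lt_fib (le_refl 2)).mpr (by omega) |>.ne'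
    exact ⟨_, minFac_prime hfdq, minFac_dvd _, hfd ▸ (minFac_prime hfdq).not_dvd_one⟩
  rcases hq.eq_two_or_odd' with rfl | hodd
  · exact exists_prime_dvd_fib_two_mul_not_dvd_fib (by grind)
  · exact exists_prime_dvd_fib_mul_not_dvd_fib_of_ne_two hd.le hq (by rintro rfl; norm_num at hodd)

theorem dvd_of_forall_prime_dvd_fib {j i : ℕ} (hj : 3 ≤ j) (hj6 : j ≠ 6)
    (h : ∀ p, p.Prime → p ∣ fib j → p ∣ fib i) : j ∣ i := by
  by_contra hji
  set g := Nat.gcd j i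
  have hg : j / g ≠ 1 := fun h1 =>
    hji (Nat.eq_of_dvd_of_div_eq_one (Nat.gcd_dvd_left j i) h1 ▸ Nat.gcd_dvd_right j i)
  obtain ⟨q, hq, s, hs⟩ := Nat.exists_prime_and_dvd hg
  have hjgsq : j = g * s * q := by
    rw [← Nat.mul_div_cancel' (Nat.gcd_dvd_left j i), hs]
    ring
  have h32 : (g * s, q) ≠ (3, 2) := by
    rw [Ne, Prod.mk.injEq]
    rintro ⟨h3, rfl⟩
    omega
  obtain ⟨p, hp, hpj, hpd⟩ := exists_prime_dvd_fib_mul_not_dvd_fib hq (hjgsq ▸ hj) h32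
  rw [← hjgsq] at hpj
  refine hpd ((?_ : p ∣ fib g).trans (fib_dvd g (g * s) (dvd_mul_right g s)))
  rw [fib_gcd]
  exact Nat.dvd_gcd hpj (h p hp hpj)

theorem fib_pow_dvd_iff_general (j e i : ℕ) (hj : 4 ≤ j) (hj6 : j ≠ 6) (he : 1 ≤ e) :
    Nat.fib j ∣ (Nat.fib i) ^ e ↔ j ∣ i :=
  ⟨fun h => dvd_of_forall_prime_dvd_fib (by omega) hj6 fun p hp hpj =>
      hp.dvd_of_dvd_pow (hpj.trans h),
    fun h => (fib_dvd j i h).trans (dvd_pow_self _ (by omega))⟩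

theorem fib_pow_dvd_iff (j e i : ℕ) (hj : 4 ≤ j) (hj6 : j ≠ 6) (he : 1 ≤ e) (hi : 1 ≤ i) :
    Nat.fib j ∣ (Nat.fib i) ^ e ↔ j ∣ i :=
  fib_pow_dvd_iff_general j e i hj hj6 he
end

section
/- Let j ≥ 4 with j ≠ 6, and let e ≥ 1. The minimal period π of the sequence (F_i^e mod F_j) is: π = j if j is even and e is even; π = 2j if j is even and e is odd; π = j if j is odd and 4 divides e; π = 2j if j is odd and e ≡ 2 (mod 4); π = 4j if j is odd and e is odd. -/
/-!
Write `c = F_{j+1}`. Since `F_{i+j} ≡ F_i c (mod F_j)` and `c² ≡ (-1)^j` by Cassini, a multiple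
`t j` of `j` is a period of `F_i^e` exactly when `(c^e)^t = 1`; the least one is `j · ord(c^e)`,
where `ord c` is `2` for even `j` and `4` for odd `j`.

Every period is a multiple of `j`: otherwise `F_j ∣ F_i^e` for some `0 < i < j`, so every prime
factor of `F_j` divides `F_g` for `g = j / ℓ`, `ℓ` a prime factor of `j`. Expanding
`φ^{gℓ} = (F_g φ + F_{g-1})^ℓ` shows `R = F_{gℓ} / F_g ≡ ℓ F_{g-1}^{ℓ-1} + C(ℓ,2) F_g F_{g-1}^{ℓ-2}`
modulo `F_g²`. Hence all prime factors of `R` equal `ℓ`, i.e. `R` is a power of `ℓ`. For odd `ℓ`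
the congruence gives `ℓ² ∤ R`, so `R = ℓ`, which is too small; for `ℓ = 2`, `R` is the Lucas
number `L_g`, which is never divisible by `8`.
-/

open Nat Finset

theorem natCast_fib_add (i j : ℕ) : (fib (i + j) : ZMod (fib j)) = fib i * fib (j + 1) := by
  have h := Int.fib_add i j
  rw [← Nat.cast_add, ← Nat.cast_succ, Int.fib_natCast, Int.fib_natCast, Int.fib_natCast,
    Int.fib_natCast] at h
  have := congrArg (Int.cast : ℤ → ZMod (fib j)) h
  push_cast [ZMod.natCast_self] at this
  simpa using this

theorem natCast_fib_add_mul (i t j : ℕ) :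
    (fib (i + t * j) : ZMod (fib j)) = fib i * fib (j + 1) ^ t := by
  induction t with
  | zero => simp
  | succ t ih => rw [add_one_mul, ← add_assoc, natCast_fib_add, ih, pow_succ, mul_assoc]

theorem natCast_fib_succ_sq (j : ℕ) : (fib (j + 1) : ZMod (fib j)) ^ 2 = (-1) ^ j := by
  have cassini := Int.fib_succ_mul_fib_pred_sub_fib_sq j
  have hpred : Int.fib ((j : ℤ) - 1) = Int.fib (j + 1) - Int.fib j := by
    have := Int.fib_add_two ((j : ℤ) - 1)
    rw [show (j : ℤ) - 1 + 2 = j + 1 by ring, sub_add_cancel] at this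
    linarith
  rw [hpred, Int.natAbs_natCast, ← Nat.cast_succ, Int.fib_natCast, Int.fib_natCast] at cassini
  have := congrArg (Int.cast : ℤ → ZMod (fib j)) cassini
  push_cast [ZMod.natCast_self] at this
  linear_combination this

theorem natCast_fib_succ_ne_one {j : ℕ} (hj : 4 ≤ j) : (fib (j + 1) : ZMod (fib j)) ≠ 1 := by
  obtain ⟨k, rfl⟩ : ∃ k, j = k + 1 := ⟨j - 1, by omega⟩
  have hlt : fib k < fib (k + 1) := fib_lt_fib_succ (by omega)
  have h2 : 2 ≤ fib k := (by decide : 2 ≤ fib 3).trans (fib_mono (by omega))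
  rw [fib_add_two, Nat.cast_add, ZMod.natCast_self, add_zero]
  intro h
  have := (ZMod.natCast_eq_natCast_iff' (fib k) 1 (fib (k + 1))).1 (by simpa using h)
  rw [Nat.mod_eq_of_lt hlt, Nat.mod_eq_of_lt (by omega)] at this
  omega

theorem orderOf_natCast_fib_succ {j : ℕ} (hj : 4 ≤ j) :
    orderOf (fib (j + 1) : ZMod (fib j)) = if Even j then 2 else 4 := by
  split_ifs with hje
  · exact orderOf_eq_prime (by rw [natCast_fib_succ_sq, hje.neg_one_pow])
      (natCast_fib_succ_ne_one hj)
  · have : Fact (2 < fib j) := ⟨(by decide : 2 < fib 4).trans_le (fib_mono hj)⟩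
    have hsq : (fib (j + 1) : ZMod (fib j)) ^ 2 = -1 := by
      rw [natCast_fib_succ_sq, (Nat.not_even_iff_odd.1 hje).neg_one_pow]
    refine orderOf_eq_prime_pow (p := 2) (n := 1) ?_ ?_
    · rw [pow_one, hsq]; exact ZMod.neg_one_ne_one
    · rw [show 2 ^ (1 + 1) = 2 * 2 from rfl, pow_mul, hsq]; norm_num

theorem fib_succ_mul_eq_sum (m n : ℕ) :
    fib ((m + 1) * n) =
      ∑ k ∈ range (n + 1), n.choose k * fib (m + 1) ^ k * fib m ^ (n - k) * fib k := by
  have hφ := Real.goldenRatio_mul_fib_succ_add_fib m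
  have hψ := Real.goldenConj_mul_fib_succ_add_fib m
  rw [← Nat.cast_inj (R := ℝ)]
  push_cast
  generalize (fib (m + 1) : ℝ) = x, (fib m : ℝ) = y at hφ hψ ⊢
  simp_rw [Real.coe_fib_eq, pow_mul, ← hφ, ← hψ, add_pow, ← sum_sub_distrib, sum_div]
  refine sum_congr rfl fun k _ => ?_
  rw [mul_pow, mul_pow]
  ring

theorem fib_succ_mul_modEq (m n : ℕ) (hn : 2 ≤ n) :
    fib ((m + 1) * n) ≡ n * fib (m + 1) * fib m ^ (n - 1)
      + n.choose 2 * fib (m + 1) ^ 2 * fib m ^ (n - 2) [MOD fib (m + 1) ^ 3] := by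
  have hx3 : fib (m + 1) ^ 3 ∣ ∑ k ∈ Ico 3 (n + 1),
      n.choose k * fib (m + 1) ^ k * fib m ^ (n - k) * fib k :=
    dvd_sum fun k hk => (((pow_dvd_pow _ (mem_Ico.1 hk).1).mul_left _).mul_right _).mul_right _
  rw [fib_succ_mul_eq_sum, ← sum_range_add_sum_Ico _ (by omega : 3 ≤ n + 1)]
  refine ((Nat.modEq_zero_iff_dvd.2 hx3).add_left _).trans ?_
  simp only [sum_range_succ, range_one, sum_singleton, choose_zero_right, choose_one_right,
    fib_zero, fib_one, fib_two, pow_zero, pow_one, mul_zero, mul_one, zero_add, add_zero]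
  rfl

theorem fib_succ_mul_div_modEq (m n : ℕ) (hn : 2 ≤ n) :
    fib ((m + 1) * n) / fib (m + 1) ≡ n * fib m ^ (n - 1)
      + n.choose 2 * fib (m + 1) * fib m ^ (n - 2) [MOD fib (m + 1) ^ 2] := by
  refine Nat.ModEq.mul_right_cancel' (c := fib (m + 1)) (fib_pos.2 m.succ_pos).ne' ?_
  rw [Nat.div_mul_cancel (fib_dvd _ _ (dvd_mul_right _ _))]
  convert fib_succ_mul_modEq m n hn using 1 <;> ring

theorem not_dvd_fib_of_dvd_fib_succ {q m : ℕ} (hq : q.Prime) (h : q ∣ fib (m + 1)) :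
    ¬ q ∣ fib m := fun h' =>
  hq.not_dvd_one (by simpa [(fib_coprime_fib_succ m).gcd_eq_one] using Nat.dvd_gcd h' h)

theorem Nat.Prime.dvd_of_dvd_fib_succ_mul_div {q m n : ℕ} (hq : q.Prime) (hn : 2 ≤ n)
    (hqx : q ∣ fib (m + 1)) (hqR : q ∣ fib ((m + 1) * n) / fib (m + 1)) : q ∣ n := by
  have hmod := (fib_succ_mul_div_modEq m n hn).of_dvd (dvd_pow hqx two_ne_zero)
  rw [hmod.dvd_iff dvd_rfl, Nat.dvd_add_left ((hqx.mul_left _).mul_right _)] at hqR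
  exact (hq.dvd_mul.1 hqR).resolve_right fun h =>
    not_dvd_fib_of_dvd_fib_succ hq hqx (hq.dvd_of_dvd_pow h)

theorem not_sq_dvd_fib_succ_mul_div {ℓ m : ℕ} (hℓ : ℓ.Prime) (hℓ2 : ℓ ≠ 2)
    (hℓx : ℓ ∣ fib (m + 1)) : ¬ ℓ ^ 2 ∣ fib ((m + 1) * ℓ) / fib (m + 1) := by
  intro hR
  have hmod := (fib_succ_mul_div_modEq m ℓ hℓ.two_le).of_dvd (pow_dvd_pow_of_dvd hℓx 2)
  have hchoose : ℓ ∣ ℓ.choose 2 := hℓ.dvd_choose_self two_ne_zero (by have := hℓ.two_le; omega)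
  have htail : ℓ ^ 2 ∣ ℓ.choose 2 * fib (m + 1) * fib m ^ (ℓ - 2) := by
    rw [sq]; exact (mul_dvd_mul hchoose hℓx).mul_right _
  rw [hmod.dvd_iff dvd_rfl, Nat.dvd_add_left htail, sq] at hR
  exact not_dvd_fib_of_dvd_fib_succ hℓ hℓx
    (hℓ.dvd_of_dvd_pow (Nat.dvd_of_mul_dvd_mul_left hℓ.pos hR))

theorem lt_fib_succ_mul_div {m n : ℕ} (hm : 1 ≤ m) (hn : 2 ≤ n) :
    n < fib ((m + 1) * n) / fib (m + 1) := by
  have hx := fib_pos.2 m.succ_pos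
  have hB := fib_pos.2 hm
  refine Nat.lt_of_mul_lt_mul_right (a := fib (m + 1)) ?_
  rw [Nat.div_mul_cancel (fib_dvd _ _ (dvd_mul_right _ _)), fib_succ_mul_eq_sum]
  refine lt_of_lt_of_le ?_ (add_le_sum (i := 1) (j := 2) (fun _ _ => zero_le _)
    (by simp; omega) (by simp; omega) (by decide))
  have h1 : n * fib (m + 1) ≤ n * fib (m + 1) * fib m ^ (n - 1) :=
    Nat.le_mul_of_pos_right _ (pow_pos hB _)
  have h2 : 0 < n.choose 2 * fib (m + 1) ^ 2 * fib m ^ (n - 2) :=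
    Nat.mul_pos (Nat.mul_pos (choose_pos hn) (pow_pos hx 2)) (pow_pos hB _)
  simp only [choose_one_right, pow_one, fib_one, fib_two, mul_one]
  omega

theorem fib_succ_mul_two_div (m : ℕ) : fib ((m + 1) * 2) / fib (m + 1) = fib m + fib (m + 2) := by
  refine Nat.div_eq_of_eq_mul_right (fib_pos.2 m.succ_pos) ?_
  rw [fib_succ_mul_eq_sum, fib_add_two]
  simp only [sum_range_succ, range_one, sum_singleton, choose_zero_right, choose_one_right,
    choose_self, fib_zero, fib_one, fib_two, pow_zero, pow_one, mul_zero, mul_one, zero_add]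
  ring

theorem fib_add_twelve_modEq (n : ℕ) : fib (n + 12) ≡ fib n [MOD 8] := by
  rw [show n + 12 = n + 11 + 1 from rfl, fib_add, show fib 11 = 89 by decide,
    show fib 12 = 144 by decide, Nat.ModEq]
  omega

theorem not_eight_dvd_fib_add_fib_add_two (n : ℕ) : ¬ 8 ∣ fib n + fib (n + 2) := by
  have hper : Function.Periodic (fun n => (fib n + fib (n + 2)) % 8) 12 := fun n =>
    ((fib_add_twelve_modEq n).add (fib_add_twelve_modEq (n + 2)) :)
  rw [Nat.dvd_iff_mod_eq_zero, ← hper.map_mod_nat]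
  exact (by decide : ∀ r < 12, (fib r + fib (r + 2)) % 8 ≠ 0) _ (n.mod_lt (by norm_num))

theorem primeFactors_fib_mul_not_subset {g ℓ : ℕ} (hℓ : ℓ.Prime) (h4 : 4 ≤ g * ℓ)
    (h6 : g * ℓ ≠ 6) : ¬ (fib (g * ℓ)).primeFactors ⊆ (fib g).primeFactors := by
  intro hsub
  have hg : 3 ≤ g := by
    by_contra! hg
    have hfib : 1 < fib (g * ℓ) := lt_of_lt_of_le (by decide) (fib_mono h4)
    obtain ⟨q, hq⟩ := Nat.nonempty_primeFactors.2 hfib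
    have := hsub hq
    interval_cases g <;> simp at this
  obtain ⟨m, rfl⟩ : ∃ m, g = m + 1 := ⟨g - 1, by omega⟩
  set R := fib ((m + 1) * ℓ) / fib (m + 1)
  have hRdvd : R ∣ fib ((m + 1) * ℓ) := Nat.div_dvd_of_dvd (fib_dvd _ _ (dvd_mul_right _ _))
  have hℓR : ℓ < R := lt_fib_succ_mul_div (by omega) hℓ.two_le
  have hdvd_x : ∀ q, q.Prime → q ∣ R → q ∣ fib (m + 1) := fun q hq hqR =>
    (Nat.mem_primeFactors.1 (hsub (Nat.mem_primeFactors.2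
      ⟨hq, hqR.trans hRdvd, (fib_pos.2 (by omega)).ne'⟩))).2.1
  obtain ⟨s, hs⟩ : ∃ s, R = ℓ ^ s := ⟨_, Nat.eq_prime_pow_of_unique_prime_dvd (by omega)
    fun hq hqR => (Nat.prime_dvd_prime_iff_eq hq hℓ).1
      (hq.dvd_of_dvd_fib_succ_mul_div hℓ.two_le (hdvd_x _ hq hqR) hqR)⟩
  rcases eq_or_ne ℓ 2 with rfl | hℓ2
  · have hm : 3 ≤ m := by omega
    have hL : R = fib m + fib (m + 2) := fib_succ_mul_two_div m
    have h7 : 7 ≤ R := by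
      have := fib_mono hm
      have := fib_mono (show 5 ≤ m + 2 by omega)
      simp only [show fib 3 = 2 by decide, show fib 5 = 5 by decide] at *
      omega
    have hs3 : 3 ≤ s := (Nat.pow_lt_pow_iff_right one_lt_two).1 (show 2 ^ 2 < 2 ^ s by omega)
    refine not_eight_dvd_fib_add_fib_add_two m ?_
    rw [← hL, hs]
    exact Nat.pow_dvd_pow 2 hs3
  · have hs2 : 2 ≤ s := (Nat.pow_lt_pow_iff_right hℓ.one_lt).1 (by rw [pow_one, ← hs]; exact hℓR)
    have hsq : ℓ ^ 2 ∣ R := hs ▸ Nat.pow_dvd_pow ℓ hs2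
    exact not_sq_dvd_fib_succ_mul_div hℓ hℓ2
      (hdvd_x ℓ hℓ ((dvd_pow_self ℓ two_ne_zero).trans hsq)) hsq

theorem primeFactors_fib_not_subset {j m : ℕ} (hj : 4 ≤ j) (hj6 : j ≠ 6) (hm : 0 < m)
    (hmj : m < j) : ¬ (fib j).primeFactors ⊆ (fib m).primeFactors := by
  intro hsub
  set d := Nat.gcd m j
  have hsub_d : (fib j).primeFactors ⊆ (fib d).primeFactors := by
    rw [fib_gcd, primeFactors_gcd (fib_pos.2 hm).ne' (fib_pos.2 (by omega)).ne']
    exact subset_inter hsub subset_rfl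
  have hd : 0 < d := Nat.gcd_pos_of_pos_left j hm
  have hdj : d < j := lt_of_le_of_lt (Nat.gcd_le_left j hm) hmj
  obtain ⟨k, hk⟩ := Nat.gcd_dvd_right m j
  obtain ⟨ℓ, hℓ, k', rfl⟩ := Nat.exists_prime_and_dvd (show k ≠ 1 by rintro rfl; omega)
  have hj' : j = d * k' * ℓ := by rw [hk]; ring
  rw [hj'] at hsub_d hj hj6
  refine primeFactors_fib_mul_not_subset hℓ hj hj6 (hsub_d.trans (primeFactors_mono
    (fib_dvd _ _ (dvd_mul_right d k')) (fib_pos.2 ?_).ne'))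
  exact Nat.mul_pos hd (Nat.pos_of_ne_zero fun h => by simp [h] at hj)

theorem dvd_of_fib_pow_periodic {j e p : ℕ} (hj : 4 ≤ j) (hj6 : j ≠ 6) (he : 1 ≤ e)
    (hp : ∀ i, fib (i + p) ^ e ≡ fib i ^ e [MOD fib j]) : j ∣ p := by
  by_contra hjp
  have hr : 0 < p % j := Nat.pos_of_ne_zero fun h => hjp (Nat.dvd_of_mod_eq_zero h)
  have hrj : p % j < j := Nat.mod_lt _ (by omega)
  have hdvd : fib j ∣ fib (j - p % j + p) ^ e := by
    refine (fib_dvd _ _ ⟨p / j + 1, ?_⟩).trans (dvd_pow_self _ (by omega))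
    have := Nat.div_add_mod p j
    rw [mul_add_one]; omega
  rw [(hp _).dvd_iff dvd_rfl] at hdvd
  refine primeFactors_fib_not_subset hj hj6 (by omega) (by omega : j - p % j < j) ?_
  rw [← primeFactors_pow (fib (j - p % j)) (by omega : e ≠ 0)]
  exact primeFactors_mono hdvd (pow_ne_zero _ (fib_pos.2 (by omega)).ne')

theorem fib_pow_add_mul_modEq_iff {j e t : ℕ} :
    (∀ i, fib (i + t * j) ^ e ≡ fib i ^ e [MOD fib j]) ↔
      ((fib (j + 1) : ZMod (fib j)) ^ e) ^ t = 1 := by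
  simp_rw [← ZMod.natCast_eq_natCast_iff, Nat.cast_pow, natCast_fib_add_mul, mul_pow,
    ← pow_mul, mul_comm _ e, pow_mul]
  refine ⟨fun h => by simpa using h 1, fun h i => by rw [h, mul_one]⟩

theorem isLeast_fib_pow_periods {j e : ℕ} (hj : 4 ≤ j) (hj6 : j ≠ 6) (he : 1 ≤ e) :
    IsLeast {p : ℕ | 0 < p ∧ ∀ i : ℕ, fib (i + p) ^ e ≡ fib i ^ e [MOD fib j]}
      (j * orderOf ((fib (j + 1) : ZMod (fib j)) ^ e)) := by
  have hc : 0 < orderOf (fib (j + 1) : ZMod (fib j)) := by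
    rw [orderOf_natCast_fib_succ hj]; split_ifs <;> norm_num
  refine ⟨⟨Nat.mul_pos (by omega) (orderOf_pos_iff.1 hc).pow.orderOf_pos, ?_⟩, ?_⟩
  · rw [mul_comm]; exact fib_pow_add_mul_modEq_iff.2 (pow_orderOf_eq_one _)
  · rintro p ⟨hp, hper⟩
    obtain ⟨t, rfl⟩ := dvd_of_fib_pow_periodic hj hj6 he hper
    rw [mul_comm j t] at hper
    exact Nat.mul_le_mul_left j (Nat.le_of_dvd (Nat.pos_of_mul_pos_left hp)
      (orderOf_dvd_of_pow_eq_one (fib_pow_add_mul_modEq_iff.1 hper)))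

theorem fib_pow_minimal_period (j e : ℕ) (hj : 4 ≤ j) (hj6 : j ≠ 6) (he : 1 ≤ e) :
    IsLeast {p : ℕ | 0 < p ∧ ∀ i : ℕ, Nat.fib (i + p) ^ e ≡ Nat.fib i ^ e [MOD Nat.fib j]}
      (if Even j then (if Even e then j else 2 * j)
       else (if 4 ∣ e then j else if e % 4 = 2 then 2 * j else 4 * j)) := by
  convert isLeast_fib_pow_periods hj hj6 he using 1
  rw [orderOf_pow' _ (by omega), orderOf_natCast_fib_succ hj]
  split_ifs with hj2 he2 he4 he42 <;> rw [Nat.gcd_rec]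
  · rw [Nat.even_iff.1 he2]; simp
  · rw [Nat.odd_iff.1 (Nat.not_even_iff_odd.1 he2)]; simp [mul_comm]
  · rw [Nat.mod_eq_zero_of_dvd he4]; simp
  · rw [he42]; simp [mul_comm]
  · obtain h | h : e % 4 = 1 ∨ e % 4 = 3 := by omega
    all_goals rw [h]; simp [mul_comm]
end
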